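/- arXiv:2111.15294 — 3 statements merged into one kernel-verified Lean document; each statement's English description precedes it below -/
import Mathlib

section
/- Let n ≥ 1, ε > 0 and u ∈ L¹(ℝⁿ). Then the unfolded function (x, y) ↦ u(ε⌊x/ε⌋ + εy) is integrable on ℝⁿ × [0,1)ⁿ with respect to the product Lebesgue measure, and ∫_{ℝⁿ} ∫_{[0,1)ⁿ} u(ε⌊x/ε⌋ + εy) dy dx = ∫_{ℝⁿ} u(x) dx (integral-preserving property of the periodic unfolding operator). -/
open MeasureTheory

/-- The shifted point used by the periodic unfolding operator:
`unfoldPt n ε x y = ε⌊x/ε⌋ + εy` (componentwise floor). -/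
noncomputable def unfoldPt (n : ℕ) (ε : ℝ) (x y : Fin n → ℝ) : Fin n → ℝ :=
  fun i => ε * (⌊x i / ε⌋ : ℤ) + ε * y i

/-- The unit reference cell `Y = [0,1)ⁿ`. -/
def unitCell (n : ℕ) : Set (Fin n → ℝ) := Set.univ.pi fun _ => Set.Ico (0 : ℝ) 1

section Aux

open Set

/-- One-dimensional unfolding map is measure preserving. -/
lemma unfold_oneD_measurePreserving {ε : ℝ} (hε : 0 < ε) :
    MeasurePreserving (fun p : ℝ × ℝ => ε * (⌊p.1 / ε⌋ : ℤ) + ε * p.2)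
      ((volume : Measure ℝ).prod ((volume : Measure ℝ).restrict (Set.Ico 0 1))) volume := by
  set f : ℝ × ℝ → ℝ := fun p => ε * (⌊p.1 / ε⌋ : ℤ) + ε * p.2 with hf
  have hmeas : Measurable f := by
    apply Measurable.add
    · exact (measurable_from_top.comp ((measurable_fst.div_const ε).floor)).const_mul ε
    · exact measurable_snd.const_mul ε
  refine ⟨hmeas, ?_⟩
  ext s hs
  rw [Measure.map_apply hmeas hs, Measure.prod_apply (hmeas hs)]
  -- fiber computation
  have fiber : ∀ k : ℤ, (volume.restrict (Set.Ico (0:ℝ) 1))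
      {y : ℝ | ε * (k:ℝ) + ε * y ∈ s}
      = ENNReal.ofReal ε⁻¹ * volume (s ∩ Set.Ico (ε * k) (ε * k + ε)) := by
    intro k
    have hmA : MeasurableSet {y : ℝ | ε * (k:ℝ) + ε * y ∈ s} :=
      (measurable_const.add (measurable_id.const_mul ε)) hs
    rw [Measure.restrict_apply hmA]
    have hset : {y : ℝ | ε * (k:ℝ) + ε * y ∈ s} ∩ Set.Ico 0 1
        = (fun y : ℝ => ε * y) ⁻¹' ((fun z : ℝ => ε * (k:ℝ) + z) ⁻¹' (s ∩ Set.Ico (ε * k) (ε * k + ε))) := by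
      ext y
      simp only [mem_inter_iff, mem_setOf_eq, mem_preimage, mem_Ico]
      constructor
      · rintro ⟨h1, h2, h3⟩
        refine ⟨h1, ?_, ?_⟩
        · nlinarith
        · nlinarith
      · rintro ⟨h1, h2, h3⟩
        refine ⟨h1, ?_, ?_⟩
        · nlinarith
        · nlinarith
    rw [hset]
    have hm2 : MeasurableSet ((fun z : ℝ => ε * (k:ℝ) + z) ⁻¹' (s ∩ Set.Ico (ε * k) (ε * k + ε))) :=
      (measurable_const_add _) (hs.inter measurableSet_Ico)
    calc volume ((fun y : ℝ => ε * y) ⁻¹' ((fun z : ℝ => ε * (k:ℝ) + z) ⁻¹' (s ∩ Set.Ico (ε * k) (ε * k + ε))))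
        = (Measure.map (fun y : ℝ => ε * y) volume) ((fun z : ℝ => ε * (k:ℝ) + z) ⁻¹' (s ∩ Set.Ico (ε * k) (ε * k + ε))) := by
          rw [Measure.map_apply (measurable_const_mul ε) hm2]
      _ = ENNReal.ofReal |ε⁻¹| * volume ((fun z : ℝ => ε * (k:ℝ) + z) ⁻¹' (s ∩ Set.Ico (ε * k) (ε * k + ε))) := by
          rw [Real.map_volume_mul_left hε.ne']; rfl
      _ = ENNReal.ofReal ε⁻¹ * volume (s ∩ Set.Ico (ε * k) (ε * k + ε)) := by
          rw [measure_preimage_add, abs_of_pos (inv_pos.mpr hε)]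
  -- partition of ℝ into the Icos
  set I : ℤ → Set ℝ := fun k => Set.Ico (ε * k) (ε * k + ε) with hI
  have hIm : ∀ k, MeasurableSet (I k) := fun k => measurableSet_Ico
  have hId : Pairwise (Function.onFun Disjoint I) := by
    intro k l hkl
    rcases hkl.lt_or_gt with h | h
    · apply Set.Ico_disjoint_Ico.mpr
      have h1 : (k : ℝ) + 1 ≤ l := by exact_mod_cast h
      have h2 : ε * k + ε ≤ ε * l := by nlinarith
      exact le_trans (min_le_left _ _) (le_trans h2 (le_max_right _ _))
    · apply Set.Ico_disjoint_Ico.mpr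
      have h1 : (l : ℝ) + 1 ≤ k := by exact_mod_cast h
      have h2 : ε * l + ε ≤ ε * k := by nlinarith
      exact le_trans (min_le_right _ _) (le_trans h2 (le_max_left _ _))
  have hIu : (⋃ k : ℤ, I k) = Set.univ := by
    ext x
    simp only [mem_iUnion, mem_univ, iff_true, hI, mem_Ico]
    refine ⟨⌊x / ε⌋, ?_, ?_⟩
    · have := Int.floor_le (x / ε)
      calc ε * ⌊x / ε⌋ ≤ ε * (x / ε) := by nlinarith
        _ = x := by field_simp
    · have hx : x / ε < ⌊x / ε⌋ + 1 := Int.lt_floor_add_one (x / ε)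
      calc x = ε * (x / ε) := by field_simp
        _ < ε * (⌊x / ε⌋ + 1) := by nlinarith
        _ = ε * ⌊x / ε⌋ + ε := by ring
  have floor_on : ∀ k : ℤ, ∀ x ∈ I k, (⌊x / ε⌋ : ℤ) = k := by
    intro k x hx
    simp only [hI, mem_Ico] at hx
    rw [Int.floor_eq_iff]
    constructor
    · rw [le_div_iff₀ hε]; nlinarith [hx.1]
    · rw [div_lt_iff₀ hε]; nlinarith [hx.2]
  -- compute the integral
  have : ∫⁻ x, (volume.restrict (Set.Ico (0:ℝ) 1)) (Prod.mk x ⁻¹' (f ⁻¹' s)) ∂volume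
      = ∑' k : ℤ, volume (s ∩ I k) := by
    rw [← setLIntegral_univ, ← hIu, lintegral_iUnion hIm hId]
    congr 1
    ext k
    have : ∀ x ∈ I k, (volume.restrict (Set.Ico (0:ℝ) 1)) (Prod.mk x ⁻¹' (f ⁻¹' s))
        = ENNReal.ofReal ε⁻¹ * volume (s ∩ I k) := by
      intro x hx
      have h1 : Prod.mk x ⁻¹' (f ⁻¹' s) = {y : ℝ | ε * ((⌊x / ε⌋ : ℤ) : ℝ) + ε * y ∈ s} := rfl
      rw [h1, floor_on k x hx, fiber k]
    rw [setLIntegral_congr_fun (hIm k) this, setLIntegral_const]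
    have hIvol : volume (I k) = ENNReal.ofReal ε := by
      simp [hI, Real.volume_Ico]
    rw [hIvol, mul_assoc, mul_comm (volume (s ∩ I k)) (ENNReal.ofReal ε), ← mul_assoc,
      ← ENNReal.ofReal_mul (le_of_lt (inv_pos.mpr hε)),
      inv_mul_cancel₀ hε.ne', ENNReal.ofReal_one, one_mul]
  rw [this]
  rw [← measure_iUnion (fun k l hkl => (hId hkl).mono inter_subset_right inter_subset_right)
    (fun k => hs.inter (hIm k))]
  rw [← Set.inter_iUnion, hIu, Set.inter_univ]

/-- The restriction of Lebesgue measure to the unit cell is the product of the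
1-dimensional restrictions. -/
lemma restrict_unitCell (n : ℕ) :
    (volume : Measure (Fin n → ℝ)).restrict (unitCell n)
      = Measure.pi (fun _ : Fin n => (volume : Measure ℝ).restrict (Set.Ico 0 1)) := by
  refine (Measure.pi_eq (μ := fun _ : Fin n => (volume : Measure ℝ).restrict (Set.Ico 0 1))
    fun s hs => ?_).symm
  rw [Measure.restrict_apply (MeasurableSet.univ_pi hs)]
  have : (Set.univ.pi s) ∩ unitCell n = Set.univ.pi fun i => s i ∩ Set.Ico 0 1 := by
    ext x; simp [unitCell, Set.mem_pi, forall_and]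
  rw [this, volume_pi_pi]
  simp [Measure.restrict_apply (hs _)]

/-- The `n`-dimensional unfolding map is measure preserving. -/
lemma unfold_measurePreserving (n : ℕ) {ε : ℝ} (hε : 0 < ε) :
    MeasurePreserving (fun p : (Fin n → ℝ) × (Fin n → ℝ) => unfoldPt n ε p.1 p.2)
      ((volume : Measure (Fin n → ℝ)).prod
        ((volume : Measure (Fin n → ℝ)).restrict (unitCell n)))
      (volume : Measure (Fin n → ℝ)) := by
  have hF : MeasurePreserving
      (fun a : Fin n → ℝ × ℝ => fun i => ε * (⌊(a i).1 / ε⌋ : ℤ) + ε * (a i).2)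
      (Measure.pi fun _ : Fin n => (volume : Measure ℝ).prod (volume.restrict (Set.Ico 0 1)))
      (Measure.pi fun _ : Fin n => (volume : Measure ℝ)) :=
    measurePreserving_pi _ _ fun _ => unfold_oneD_measurePreserving hε
  have he : MeasurePreserving (MeasurableEquiv.arrowProdEquivProdArrow ℝ ℝ (Fin n)).symm
      ((Measure.pi fun _ : Fin n => (volume : Measure ℝ)).prod
        (Measure.pi fun _ : Fin n => (volume : Measure ℝ).restrict (Set.Ico 0 1)))
      (Measure.pi fun _ : Fin n => (volume : Measure ℝ).prod (volume.restrict (Set.Ico 0 1))) :=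
    (measurePreserving_arrowProdEquivProdArrow ℝ ℝ (Fin n) _ _).symm _
  have hcomp := hF.comp he
  have hfun : ((fun a : Fin n → ℝ × ℝ => fun i => ε * (⌊(a i).1 / ε⌋ : ℤ) + ε * (a i).2) ∘
      (MeasurableEquiv.arrowProdEquivProdArrow ℝ ℝ (Fin n)).symm)
      = fun p : (Fin n → ℝ) × (Fin n → ℝ) => unfoldPt n ε p.1 p.2 := by
    funext p
    rfl
  rw [hfun] at hcomp
  have hv : (Measure.pi fun _ : Fin n => (volume : Measure ℝ)) = (volume : Measure (Fin n → ℝ)) :=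
    rfl
  rw [hv, ← restrict_unitCell n] at hcomp
  exact hcomp

end Aux

/-- Integral-preserving property of the periodic unfolding operator:
for `u ∈ L¹(ℝⁿ)` the unfolded function `(x,y) ↦ u(ε⌊x/ε⌋ + εy)` is integrable on
`ℝⁿ × [0,1)ⁿ` and has the same integral as `u`. -/
theorem unfolding_integral_preserving (n : ℕ) (hn : 1 ≤ n) (ε : ℝ) (hε : 0 < ε)
    (u : (Fin n → ℝ) → ℝ) (hu : Integrable u (volume : Measure (Fin n → ℝ))) :
    Integrable (fun p : (Fin n → ℝ) × (Fin n → ℝ) => u (unfoldPt n ε p.1 p.2))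
      ((volume : Measure (Fin n → ℝ)).prod
        ((volume : Measure (Fin n → ℝ)).restrict (unitCell n))) ∧
    (∫ x : Fin n → ℝ, ∫ y in unitCell n, u (unfoldPt n ε x y)) = ∫ x : Fin n → ℝ, u x := by
  have hmp := unfold_measurePreserving n hε
  have hint : Integrable (fun p : (Fin n → ℝ) × (Fin n → ℝ) => u (unfoldPt n ε p.1 p.2))
      ((volume : Measure (Fin n → ℝ)).prod
        ((volume : Measure (Fin n → ℝ)).restrict (unitCell n))) :=
    (hmp.integrable_comp hu.aestronglyMeasurable).2 hu
  refine ⟨hint, ?_⟩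
  calc (∫ x : Fin n → ℝ, ∫ y in unitCell n, u (unfoldPt n ε x y))
      = ∫ p : (Fin n → ℝ) × (Fin n → ℝ), u (unfoldPt n ε p.1 p.2)
          ∂((volume : Measure (Fin n → ℝ)).prod
            ((volume : Measure (Fin n → ℝ)).restrict (unitCell n))) :=
        (integral_prod _ hint).symm
    _ = ∫ x, u x ∂(Measure.map (fun p : (Fin n → ℝ) × (Fin n → ℝ) => unfoldPt n ε p.1 p.2)
          ((volume : Measure (Fin n → ℝ)).prod
            ((volume : Measure (Fin n → ℝ)).restrict (unitCell n)))) := by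
        rw [integral_map hmp.measurable.aemeasurable]
        rw [hmp.map_eq]
        exact hu.aestronglyMeasurable
    _ = ∫ x : Fin n → ℝ, u x := by rw [hmp.map_eq]
end

section
/- Let n ≥ 1, 1 ≤ r < ∞, ε > 0 and u ∈ L^r(ℝⁿ). Then T_ε u ∈ L^r(ℝⁿ × [0,1)ⁿ) and the unfolding operator preserves the L^r norm: ∫_{ℝⁿ} ∫_{[0,1)ⁿ} |u(ε⌊x/ε⌋ + εy)|^r dy dx = ∫_{ℝⁿ} |u(x)|^r dx, i.e. ‖T_ε u‖_{L^r(ℝⁿ×Y)} = ‖u‖_{L^r(ℝⁿ)}. -/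
open MeasureTheory Set

namespace Unfold
variable (n : ℕ) (ε : ℝ)

def cube (k : Fin n → ℤ) : Set (Fin n → ℝ) :=
  Set.univ.pi fun i => Set.Ico (ε * k i) (ε * k i + ε)

lemma measurableSet_cube (k : Fin n → ℤ) : MeasurableSet (cube n ε k) :=
  MeasurableSet.univ_pi fun _ => measurableSet_Ico

lemma mem_cube_iff (hε : 0 < ε) (k : Fin n → ℤ) (x : Fin n → ℝ) :
    x ∈ cube n ε k ↔ ∀ i, ⌊x i / ε⌋ = k i := by
  simp only [cube, Set.mem_pi, Set.mem_univ, forall_true_left, Set.mem_Ico]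
  refine forall_congr' fun i => ?_
  rw [Int.floor_eq_iff]
  constructor
  · rintro ⟨h1, h2⟩
    refine ⟨by rw [le_div_iff₀ hε]; linarith, by rw [div_lt_iff₀ hε]; linarith⟩
  · rintro ⟨h1, h2⟩
    rw [le_div_iff₀ hε] at h1
    rw [div_lt_iff₀ hε] at h2
    constructor <;> nlinarith

lemma cube_disjoint (hε : 0 < ε) : Pairwise (Function.onFun Disjoint (cube n ε)) := by
  intro k l hkl
  rw [Function.onFun, Set.disjoint_left]
  intro x hx hx'
  rw [mem_cube_iff n ε hε] at hx hx'
  exact hkl (funext fun i => (hx i).symm.trans (hx' i))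

lemma iUnion_cube (hε : 0 < ε) : (⋃ k : Fin n → ℤ, cube n ε k) = Set.univ := by
  ext x
  simp only [Set.mem_iUnion, Set.mem_univ, iff_true]
  exact ⟨fun i => ⌊x i / ε⌋, (mem_cube_iff n ε hε _ x).2 fun i => rfl⟩

lemma volume_cube (hε : 0 < ε) (k : Fin n → ℤ) :
    volume (cube n ε k) = ENNReal.ofReal (ε ^ n) := by
  rw [cube, volume_pi_pi]
  simp only [Real.volume_Ico, add_sub_cancel_left]
  rw [Finset.prod_const, Finset.card_univ, Fintype.card_fin, ← ENNReal.ofReal_pow hε.le]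

lemma measurable_unfold :
    Measurable (fun p : (Fin n → ℝ) × (Fin n → ℝ) => unfoldPt n ε p.1 p.2) := by
  apply measurable_pi_lambda
  intro i
  have h0 : Measurable fun p : (Fin n → ℝ) × (Fin n → ℝ) => p.1 i / ε :=
    Measurable.div_const (f := fun p : (Fin n → ℝ) × (Fin n → ℝ) => p.1 i)
      ((measurable_pi_apply i).comp measurable_fst) ε
  have h1 : Measurable fun p : (Fin n → ℝ) × (Fin n → ℝ) => (⌊p.1 i / ε⌋ : ℝ) :=
    Measurable.comp (measurable_from_top : Measurable (Int.cast : ℤ → ℝ)) h0.floor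
  exact (h1.const_mul ε).add (Measurable.const_mul (f := fun p : (Fin n → ℝ) × (Fin n → ℝ) => p.2 i)
    ((measurable_pi_apply i).comp measurable_snd) ε)

lemma volume_affine_preimage (hε : 0 < ε) (c : Fin n → ℝ) (t : Set (Fin n → ℝ)) :
    volume ((fun y : Fin n → ℝ => c + ε • y) ⁻¹' t)
      = ENNReal.ofReal ((ε ^ n)⁻¹) * volume t := by
  have : (fun y : Fin n → ℝ => c + ε • y) = (fun z => c + z) ∘ (fun y => ε • y) := rfl
  rw [this, Set.preimage_comp,
    show ((fun y : Fin n → ℝ => ε • y) = (ε • ·)) from rfl,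
    Measure.addHaar_preimage_smul volume (ne_of_gt hε), measure_preimage_add]
  congr 2
  rw [Module.finrank_pi, Fintype.card_fin, abs_of_pos]
  positivity

lemma unfold_eq (x y : Fin n → ℝ) :
    unfoldPt n ε x y = (fun i => ε * (⌊x i / ε⌋ : ℤ)) + ε • y := rfl

lemma mem_cell_iff (hε : 0 < ε) (x y : Fin n → ℝ) :
    y ∈ unitCell n ↔ unfoldPt n ε x y ∈ cube n ε (fun i => ⌊x i / ε⌋) := by
  simp only [unitCell, cube, unfoldPt, Set.mem_pi, Set.mem_univ, forall_true_left, Set.mem_Ico]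
  refine forall_congr' fun i => ?_
  constructor
  · rintro ⟨h1, h2⟩; constructor <;> nlinarith
  · rintro ⟨h1, h2⟩; constructor <;> nlinarith

lemma measurePreserving_unfold (hε : 0 < ε) :
    MeasurePreserving (fun p : (Fin n → ℝ) × (Fin n → ℝ) => unfoldPt n ε p.1 p.2)
      ((volume : Measure (Fin n → ℝ)).prod
        ((volume : Measure (Fin n → ℝ)).restrict (unitCell n)))
      (volume : Measure (Fin n → ℝ)) := by
  refine ⟨measurable_unfold n ε, ?_⟩
  ext s hs
  rw [Measure.map_apply (measurable_unfold n ε) hs,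
    Measure.prod_apply (measurable_unfold n ε hs)]
  have hpre : ∀ x : Fin n → ℝ,
      (Prod.mk x ⁻¹' ((fun p : (Fin n → ℝ) × (Fin n → ℝ) => unfoldPt n ε p.1 p.2) ⁻¹' s))
        ∩ unitCell n
        = (fun y : Fin n → ℝ => (fun i => ε * (⌊x i / ε⌋ : ℤ)) + ε • y) ⁻¹'
            (s ∩ cube n ε (fun i => ⌊x i / ε⌋)) := by
    intro x
    ext y
    simp only [Set.mem_inter_iff, Set.mem_preimage, ← unfold_eq]
    exact and_congr Iff.rfl (mem_cell_iff n ε hε x y)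
  have hres : ∀ x : Fin n → ℝ,
      (volume.restrict (unitCell n))
        (Prod.mk x ⁻¹' ((fun p : (Fin n → ℝ) × (Fin n → ℝ) => unfoldPt n ε p.1 p.2) ⁻¹' s))
        = ENNReal.ofReal ((ε ^ n)⁻¹) * volume (s ∩ cube n ε (fun i => ⌊x i / ε⌋)) := by
    intro x
    rw [Measure.restrict_apply (measurable_prodMk_left (measurable_unfold n ε hs)),
      hpre x, volume_affine_preimage n ε hε]
  calc ∫⁻ x, (volume.restrict (unitCell n))
        (Prod.mk x ⁻¹' ((fun p : (Fin n → ℝ) × (Fin n → ℝ) => unfoldPt n ε p.1 p.2) ⁻¹' s))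
      = ∫⁻ x : Fin n → ℝ, ENNReal.ofReal ((ε ^ n)⁻¹) * volume (s ∩ cube n ε (fun i => ⌊x i / ε⌋)) := by
        exact lintegral_congr hres
    _ = ∑' k : Fin n → ℤ, ∫⁻ x : Fin n → ℝ in cube n ε k,
          ENNReal.ofReal ((ε ^ n)⁻¹) * volume (s ∩ cube n ε (fun i => ⌊x i / ε⌋)) := by
        rw [← lintegral_iUnion (measurableSet_cube n ε) (cube_disjoint n ε hε),
          iUnion_cube n ε hε, setLIntegral_univ]
    _ = ∑' k : Fin n → ℤ, volume (s ∩ cube n ε k) := by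
        refine tsum_congr fun k => ?_
        rw [setLIntegral_congr_fun (measurableSet_cube n ε k)
          (fun x hx => by
            rw [show (fun i => ⌊x i / ε⌋) = k from funext ((mem_cube_iff n ε hε k x).1 hx)]),
          setLIntegral_const, volume_cube n ε hε]
        rw [mul_assoc, mul_left_comm, ← ENNReal.ofReal_mul (by positivity : (0:ℝ) ≤ (ε ^ n)⁻¹),
          inv_mul_cancel₀ (by positivity : (ε:ℝ) ^ n ≠ 0), ENNReal.ofReal_one, mul_one]
    _ = volume s := by
        rw [← measure_iUnion (fun k l hkl => ((cube_disjoint n ε hε) hkl).mono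
            Set.inter_subset_right Set.inter_subset_right)
            (fun k => hs.inter (measurableSet_cube n ε k)),
          ← Set.inter_iUnion, iUnion_cube n ε hε, Set.inter_univ]

end Unfold

/-- The periodic unfolding operator preserves the `L^r` norm: for `u ∈ L^r(ℝⁿ)`,
`T_ε u ∈ L^r(ℝⁿ × [0,1)ⁿ)` and `∫∫ |T_ε u|^r = ∫ |u|^r`, so that
`‖T_ε u‖_{L^r(ℝⁿ×Y)} = ‖u‖_{L^r(ℝⁿ)}`. -/
theorem unfolding_norm_preserving (n : ℕ) (hn : 1 ≤ n) (r : ℝ) (hr : 1 ≤ r)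
    (ε : ℝ) (hε : 0 < ε) (u : (Fin n → ℝ) → ℝ)
    (hu : MemLp u (ENNReal.ofReal r) (volume : Measure (Fin n → ℝ))) :
    MemLp (fun p : (Fin n → ℝ) × (Fin n → ℝ) => u (unfoldPt n ε p.1 p.2))
      (ENNReal.ofReal r)
      ((volume : Measure (Fin n → ℝ)).prod
        ((volume : Measure (Fin n → ℝ)).restrict (unitCell n))) ∧
    ((∫ x : Fin n → ℝ, ∫ y in unitCell n, |u (unfoldPt n ε x y)| ^ r)
      = ∫ x : Fin n → ℝ, |u x| ^ r) ∧
    eLpNorm (fun p : (Fin n → ℝ) × (Fin n → ℝ) => u (unfoldPt n ε p.1 p.2))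
        (ENNReal.ofReal r)
        ((volume : Measure (Fin n → ℝ)).prod
          ((volume : Measure (Fin n → ℝ)).restrict (unitCell n)))
      = eLpNorm u (ENNReal.ofReal r) (volume : Measure (Fin n → ℝ)) := by
  have hr0 : (0:ℝ) < r := lt_of_lt_of_le one_pos hr
  have mp := Unfold.measurePreserving_unfold n ε hε
  have hmem : MemLp (fun p : (Fin n → ℝ) × (Fin n → ℝ) => u (unfoldPt n ε p.1 p.2))
      (ENNReal.ofReal r)
      ((volume : Measure (Fin n → ℝ)).prod
        ((volume : Measure (Fin n → ℝ)).restrict (unitCell n))) :=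
    hu.comp_measurePreserving mp
  refine ⟨hmem, ?_, ?_⟩
  · -- integral equality
    have hp0 : ENNReal.ofReal r ≠ 0 := by
      simp [ENNReal.ofReal_eq_zero, not_le, hr0]
    have hptop : ENNReal.ofReal r ≠ ⊤ := ENNReal.ofReal_ne_top
    have hint := hmem.integrable_norm_rpow hp0 hptop
    rw [ENNReal.toReal_ofReal hr0.le] at hint
    simp only [Real.norm_eq_abs] at hint
    have h1 : (∫ x : Fin n → ℝ, ∫ y in unitCell n, |u (unfoldPt n ε x y)| ^ r)
        = ∫ p : (Fin n → ℝ) × (Fin n → ℝ), |u (unfoldPt n ε p.1 p.2)| ^ r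
            ∂((volume : Measure (Fin n → ℝ)).prod
              ((volume : Measure (Fin n → ℝ)).restrict (unitCell n))) :=
      (integral_prod _ hint).symm
    have hfm : AEStronglyMeasurable (fun z : Fin n → ℝ => |u z| ^ r)
        (volume : Measure (Fin n → ℝ)) := by
      have := hu.aestronglyMeasurable.norm
      simp only [Real.norm_eq_abs] at this
      exact (this.aemeasurable.pow_const r).aestronglyMeasurable
    have h2 : (∫ p : (Fin n → ℝ) × (Fin n → ℝ), |u (unfoldPt n ε p.1 p.2)| ^ r
            ∂((volume : Measure (Fin n → ℝ)).prod
              ((volume : Measure (Fin n → ℝ)).restrict (unitCell n))))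
        = ∫ x : Fin n → ℝ, |u x| ^ r := by
      rw [← mp.map_eq] at hfm
      have h3 := integral_map mp.aemeasurable hfm
      rw [mp.map_eq] at h3
      exact h3.symm
    rw [h1, h2]
  · exact eLpNorm_comp_measurePreserving hu.aestronglyMeasurable mp
end

section
/- Let n ≥ 1, let ε_j > 0 with ε_j → 0, and suppose u_j → u strongly in L²(ℝⁿ). Then the unfolded sequence converges strongly in L²(ℝⁿ × Y) to u viewed as a function independent of y: ∫_{ℝⁿ} ∫_{[0,1)ⁿ} |u_j(ε_j⌊x/ε_j⌋ + ε_j y) − u(x)|² dy dx → 0 as j → ∞ (strong convergence implies strong two-scale convergence). -/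
open MeasureTheory Filter

open Set
open scoped ENNReal


namespace TwoScale

variable {n : ℕ}

def cell (n : ℕ) (ε : ℝ) (k : Fin n → ℤ) : Set (Fin n → ℝ) :=
  Set.univ.pi fun i => Set.Ico (ε * k i) (ε * k i + ε)

lemma measurableSet_cell (ε : ℝ) (k : Fin n → ℤ) : MeasurableSet (cell n ε k) :=
  MeasurableSet.univ_pi fun _ => measurableSet_Ico

lemma measurableSet_unitCell : MeasurableSet (unitCell n) :=
  MeasurableSet.univ_pi fun _ => measurableSet_Ico

lemma volume_unitCell (n : ℕ) : volume (unitCell n) = 1 := by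
  simp [unitCell, volume_pi_pi, Real.volume_Ico]

lemma mem_cell_iff {ε : ℝ} (hε : 0 < ε) {x : Fin n → ℝ} {k : Fin n → ℤ} :
    x ∈ cell n ε k ↔ ∀ i, ⌊x i / ε⌋ = k i := by
  simp only [cell, Set.mem_pi, Set.mem_univ, true_implies, Set.mem_Ico]
  refine forall_congr' fun i => ?_
  rw [Int.floor_eq_iff, le_div_iff₀ hε, div_lt_iff₀ hε]
  constructor <;> intro h <;> exact ⟨by nlinarith [h.1, h.2], by nlinarith [h.1, h.2]⟩

lemma iUnion_cell {ε : ℝ} (hε : 0 < ε) : (⋃ k : Fin n → ℤ, cell n ε k) = univ :=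
  eq_univ_of_forall fun x =>
    mem_iUnion.2 ⟨fun i => ⌊x i / ε⌋, (mem_cell_iff hε).2 fun _ => rfl⟩

lemma pairwise_disjoint_cell {ε : ℝ} (hε : 0 < ε) :
    Pairwise (Function.onFun Disjoint (cell n ε)) := fun k k' hkk' =>
  Set.disjoint_left.2 fun x hx hx' =>
    hkk' (funext fun i => ((mem_cell_iff hε).1 hx i).symm.trans ((mem_cell_iff hε).1 hx' i))

lemma volume_cell {ε : ℝ} (hε : 0 < ε) (k : Fin n → ℤ) :
    volume (cell n ε k) = ENNReal.ofReal (ε ^ n) := by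
  rw [cell, volume_pi_pi]
  simp only [Real.volume_Ico, add_sub_cancel_left]
  rw [Finset.prod_const, ← ENNReal.ofReal_pow hε.le]
  simp

lemma lintegral_floor_step {ε : ℝ} (hε : 0 < ε) (g : (Fin n → ℤ) → ℝ≥0∞) :
    ∫⁻ x : Fin n → ℝ, g (fun i => ⌊x i / ε⌋) =
      ∑' k : Fin n → ℤ, ENNReal.ofReal (ε ^ n) * g k := by
  have h0 : (∫⁻ x : Fin n → ℝ, g (fun i => ⌊x i / ε⌋)) =
      ∫⁻ x in ⋃ k : Fin n → ℤ, cell n ε k, g (fun i => ⌊x i / ε⌋) := by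
    rw [iUnion_cell hε, Measure.restrict_univ]
  rw [h0, lintegral_iUnion (fun k => measurableSet_cell ε k) (pairwise_disjoint_cell hε)]
  refine tsum_congr fun k => ?_
  have : ∫⁻ x in cell n ε k, g (fun i => ⌊x i / ε⌋) = ∫⁻ _ in cell n ε k, g k := by
    refine setLIntegral_congr_fun (measurableSet_cell ε k) (fun x hx => ?_)
    exact congrArg g (funext fun i => (mem_cell_iff hε).1 hx i)
  rw [this, setLIntegral_const, volume_cell hε, mul_comm]

lemma volume_affine_preimage {ε : ℝ} (hε : 0 < ε) (a : Fin n → ℝ) (B : Set (Fin n → ℝ)) :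
    volume ((fun y : Fin n → ℝ => fun i => a i + ε * y i) ⁻¹' B)
      = ENNReal.ofReal ((ε ^ n)⁻¹) * volume B := by
  have h : (fun y : Fin n → ℝ => fun i => a i + ε * y i)
      = (fun y : Fin n → ℝ => a + y) ∘ (fun y : Fin n → ℝ => ε • y) := by
    funext y; funext i; simp [Pi.smul_apply, smul_eq_mul]
  rw [h, Set.preimage_comp, Measure.addHaar_preimage_smul volume (ne_of_gt hε),
    measure_preimage_add]
  congr 2
  rw [Module.finrank_fin_fun ℝ, abs_of_pos (by positivity)]

end TwoScale
namespace TwoScale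

lemma measurable_affine {ε : ℝ} (a : Fin n → ℝ) :
    Measurable (fun y : Fin n → ℝ => fun i => a i + ε * y i) :=
  measurable_pi_lambda _ fun i =>
    by fun_prop

lemma restrict_unitCell_preimage {ε : ℝ} (hε : 0 < ε) (k : Fin n → ℤ)
    {A : Set (Fin n → ℝ)} (hA : MeasurableSet A) :
    volume.restrict (unitCell n)
        ((fun y : Fin n → ℝ => fun i => ε * (k i : ℤ) + ε * y i) ⁻¹' A)
      = ENNReal.ofReal ((ε ^ n)⁻¹) * volume (A ∩ cell n ε k) := by
  rw [Measure.restrict_apply (measurable_affine _ hA)]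
  have hcell : (fun y : Fin n → ℝ => fun i => ε * (k i : ℤ) + ε * y i) ⁻¹' (cell n ε k)
      = unitCell n := by
    ext y
    simp only [Set.mem_preimage, cell, unitCell, Set.mem_pi, Set.mem_univ, true_implies,
      Set.mem_Ico]
    refine forall_congr' fun i => ?_
    constructor <;> intro h <;> exact ⟨by nlinarith [h.1, h.2], by nlinarith [h.1, h.2]⟩
  calc volume ((fun y : Fin n → ℝ => fun i => ε * (k i : ℤ) + ε * y i) ⁻¹' A ∩ unitCell n)
      = volume ((fun y : Fin n → ℝ => fun i => ε * (k i : ℤ) + ε * y i) ⁻¹' (A ∩ cell n ε k)) := by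
        rw [Set.preimage_inter, hcell]
    _ = ENNReal.ofReal ((ε ^ n)⁻¹) * volume (A ∩ cell n ε k) :=
        volume_affine_preimage hε _ _

lemma measurable_unfold (n : ℕ) (ε : ℝ) :
    Measurable (fun p : (Fin n → ℝ) × (Fin n → ℝ) => unfoldPt n ε p.1 p.2) := by
  refine measurable_pi_lambda _ fun i => Measurable.add ?_ ?_
  · exact measurable_const.mul
      ((measurable_from_top.comp
        (Int.measurable_floor.comp (by fun_prop))))
  · exact measurable_const.mul ((measurable_pi_apply i).comp measurable_snd)

theorem measurePreserving_unfold (n : ℕ) {ε : ℝ} (hε : 0 < ε) :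
    MeasurePreserving (fun p : (Fin n → ℝ) × (Fin n → ℝ) => unfoldPt n ε p.1 p.2)
      ((volume : Measure (Fin n → ℝ)).prod
        ((volume : Measure (Fin n → ℝ)).restrict (unitCell n)))
      (volume : Measure (Fin n → ℝ)) := by
  refine ⟨measurable_unfold n ε, ?_⟩
  refine Measure.ext fun A hA => ?_
  rw [Measure.map_apply (measurable_unfold n ε) hA,
    Measure.prod_apply (measurable_unfold n ε hA)]
  have key : ∀ x : Fin n → ℝ,
      (volume.restrict (unitCell n))
        (Prod.mk x ⁻¹' ((fun p : (Fin n → ℝ) × (Fin n → ℝ) => unfoldPt n ε p.1 p.2) ⁻¹' A))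
      = ENNReal.ofReal ((ε ^ n)⁻¹) * volume (A ∩ cell n ε (fun i => ⌊x i / ε⌋)) := fun x =>
    restrict_unitCell_preimage hε (fun i => ⌊x i / ε⌋) hA
  simp_rw [key]
  rw [lintegral_floor_step hε (fun k => ENNReal.ofReal ((ε ^ n)⁻¹) * volume (A ∩ cell n ε k))]
  have hpow : (0:ℝ) < ε ^ n := pow_pos hε n
  simp_rw [← mul_assoc, ← ENNReal.ofReal_mul hpow.le, mul_inv_cancel₀ hpow.ne',
    ENNReal.ofReal_one, one_mul]
  rw [← measure_iUnion ((pairwise_disjoint_cell hε).mono fun k k' h =>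
      h.mono Set.inter_subset_right Set.inter_subset_right)
      (fun k => hA.inter (measurableSet_cell ε k)),
    ← Set.inter_iUnion, iUnion_cell hε, Set.inter_univ]

end TwoScale
namespace TwoScale

lemma dist_unfold_le {ε : ℝ} (hε : 0 < ε) (x : Fin n → ℝ) {y : Fin n → ℝ}
    (hy : y ∈ unitCell n) : dist (unfoldPt n ε x y) x ≤ ε := by
  rw [dist_pi_le_iff hε.le]
  intro i
  have hyi : (0:ℝ) ≤ y i ∧ y i < 1 := by
    have := (Set.mem_pi.1 hy) i (Set.mem_univ i); exact ⟨this.1, this.2⟩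
  rw [Real.dist_eq]
  have hx : x i = ε * (x i / ε) := by field_simp
  have h1 := Int.floor_le (x i / ε)
  have h2 := Int.sub_one_lt_floor (x i / ε)
  simp only [unfoldPt]
  rw [abs_le]
  constructor <;> nlinarith [hyi.1, hyi.2]

lemma ae_snd_mem :
    ∀ᵐ p ∂ ((volume : Measure (Fin n → ℝ)).prod
      ((volume : Measure (Fin n → ℝ)).restrict (unitCell n))), p.2 ∈ unitCell n := by
  rw [ae_iff]
  have h : {p : (Fin n → ℝ) × (Fin n → ℝ) | ¬ p.2 ∈ unitCell n}
      = (univ : Set (Fin n → ℝ)) ×ˢ (unitCell n)ᶜ := by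
    ext p; simp [Set.mem_prod]
  rw [h, Measure.prod_prod, Measure.restrict_apply measurableSet_unitCell.compl,
    Set.compl_inter_self]
  simp

lemma eLpNorm_two_eq {α : Type*} [MeasurableSpace α] (f : α → ℝ) (μ : Measure α) :
    eLpNorm f 2 μ = (∫⁻ x, ENNReal.ofReal (|f x| ^ 2) ∂μ) ^ (1/2 : ℝ) := by
  rw [eLpNorm_eq_lintegral_rpow_enorm_toReal two_ne_zero ENNReal.ofNat_ne_top]
  have : ∀ x, (‖f x‖ₑ) ^ ((2:ℝ≥0∞).toReal) = ENNReal.ofReal (|f x| ^ 2) := by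
    intro x
    rw [← ofReal_norm_eq_enorm, Real.norm_eq_abs,
      ENNReal.toReal_ofNat, ENNReal.ofReal_rpow_of_nonneg (abs_nonneg _) (by norm_num)]
    norm_num
  simp_rw [this]
  norm_num

end TwoScale
namespace TwoScale

lemma lintegral_sq_unfold_tendsto (g : (Fin n → ℝ) → ℝ) (hg : Continuous g)
    (hsupp : HasCompactSupport g) {εs : ℕ → ℝ} (hεpos : ∀ j, 0 < εs j)
    (hε0 : Tendsto εs atTop (nhds 0)) :
    Tendsto (fun j => ∫⁻ p : (Fin n → ℝ) × (Fin n → ℝ),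
        ENNReal.ofReal (|g (unfoldPt n (εs j) p.1 p.2) - g p.1| ^ 2)
        ∂((volume : Measure (Fin n → ℝ)).prod
          ((volume : Measure (Fin n → ℝ)).restrict (unitCell n))))
      atTop (nhds 0) := by
  obtain ⟨M, hM⟩ := hsupp.exists_bound_of_continuous hg
  have hM0 : 0 ≤ M := le_trans (norm_nonneg _) (hM 0)
  set K : Set (Fin n → ℝ) := Metric.cthickening 1 (tsupport g) with hK
  have hKc : IsCompact K := hsupp.cthickening
  have key := tendsto_lintegral_filter_of_dominated_convergence
    (l := atTop)
    (μ := (volume : Measure (Fin n → ℝ)).prod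
      ((volume : Measure (Fin n → ℝ)).restrict (unitCell n)))
    (F := fun j (p : (Fin n → ℝ) × (Fin n → ℝ)) =>
      ENNReal.ofReal (|g (unfoldPt n (εs j) p.1 p.2) - g p.1| ^ 2))
    (f := fun _ => 0)
    ((K ×ˢ (univ : Set (Fin n → ℝ))).indicator fun _ => ENNReal.ofReal ((2*M)^2))
    ?_ ?_ ?_ ?_
  · simpa using key
  · refine Eventually.of_forall fun j => ?_
    exact ENNReal.measurable_ofReal.comp
      ((((hg.measurable.comp (measurable_unfold n (εs j))).sub
        (hg.measurable.comp measurable_fst)).abs).pow_const 2)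
  · filter_upwards [hε0.eventually (gt_mem_nhds one_pos)] with j hj
    refine ae_snd_mem.mono fun p hp => ?_
    by_cases hx : p.1 ∈ K
    · rw [Set.indicator_of_mem (Set.mk_mem_prod hx (Set.mem_univ _))]
      refine ENNReal.ofReal_le_ofReal ?_
      have h1 : |g (unfoldPt n (εs j) p.1 p.2)| ≤ M := by
        simpa [Real.norm_eq_abs] using hM (unfoldPt n (εs j) p.1 p.2)
      have h2 : |g p.1| ≤ M := by simpa [Real.norm_eq_abs] using hM p.1
      have habs : |g (unfoldPt n (εs j) p.1 p.2) - g p.1| ≤ 2 * M := by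
        calc |g (unfoldPt n (εs j) p.1 p.2) - g p.1|
            ≤ |g (unfoldPt n (εs j) p.1 p.2)| + |g p.1| := abs_sub _ _
          _ ≤ 2 * M := by linarith
      exact pow_le_pow_left₀ (abs_nonneg _) habs 2
    · have hgx : g p.1 = 0 := by
        refine image_eq_zero_of_notMem_tsupport fun hmem => hx ?_
        exact Metric.self_subset_cthickening _ hmem
      have hgS : g (unfoldPt n (εs j) p.1 p.2) = 0 := by
        refine image_eq_zero_of_notMem_tsupport fun hmem => hx ?_
        refine Metric.mem_cthickening_of_dist_le p.1 (unfoldPt n (εs j) p.1 p.2) 1 _ hmem ?_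
        rw [dist_comm]
        exact (dist_unfold_le (hεpos j) p.1 hp).trans hj.le
      simp [hgx, hgS]
  · rw [lintegral_indicator (hKc.measurableSet.prod MeasurableSet.univ), setLIntegral_const,
      Measure.prod_prod]
    exact ENNReal.mul_ne_top ENNReal.ofReal_ne_top
      (ENNReal.mul_ne_top hKc.measure_lt_top.ne (by rw [Measure.restrict_apply_univ, volume_unitCell]; simp))
  · refine ae_snd_mem.mono fun p hp => ?_
    have hS : Tendsto (fun j => unfoldPt n (εs j) p.1 p.2) atTop (nhds p.1) := by
      rw [tendsto_iff_dist_tendsto_zero]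
      exact squeeze_zero (fun _ => dist_nonneg)
        (fun j => dist_unfold_le (hεpos j) p.1 hp) hε0
    have h1 : Tendsto (fun j => |g (unfoldPt n (εs j) p.1 p.2) - g p.1| ^ 2) atTop (nhds 0) := by
      have h2 : Tendsto (fun j => g (unfoldPt n (εs j) p.1 p.2) - g p.1) atTop (nhds 0) := by
        have := ((hg.tendsto p.1).comp hS).sub (tendsto_const_nhds (x := g p.1))
        simpa using this
      have h3 := ((continuous_abs.tendsto 0).comp h2)
      have h4 := h3.pow 2
      simpa using h4
    have := (ENNReal.continuous_ofReal.tendsto 0).comp h1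
    simpa [Function.comp_def] using this

end TwoScale
/-- Strong convergence implies strong two-scale convergence: if `u_j → u` strongly in
`L²(ℝⁿ)` and `ε_j → 0`, then the unfolded sequence converges strongly in `L²(ℝⁿ × Y)`
to `u` viewed as a function independent of `y`:
`∫∫ |u_j(ε_j⌊x/ε_j⌋ + ε_j y) − u(x)|² dy dx → 0`. -/
theorem strong_implies_strong_two_scale (n : ℕ) (hn : 1 ≤ n)
    (εs : ℕ → ℝ) (hεpos : ∀ j, 0 < εs j) (hε0 : Tendsto εs atTop (nhds 0))
    (u : ℕ → (Fin n → ℝ) → ℝ) (ulim : (Fin n → ℝ) → ℝ)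
    (hu : ∀ j, MemLp (u j) 2 (volume : Measure (Fin n → ℝ)))
    (hulim : MemLp ulim 2 (volume : Measure (Fin n → ℝ)))
    (hstrong : Tendsto (fun j => eLpNorm (u j - ulim) 2 (volume : Measure (Fin n → ℝ)))
      atTop (nhds 0)) :
    Tendsto
      (fun j => ∫ x : Fin n → ℝ, ∫ y in unitCell n,
        |u j (unfoldPt n (εs j) x y) - ulim x| ^ 2) atTop (nhds 0) := by
  classical
  set ν : Measure (Fin n → ℝ) := volume.restrict (unitCell n) with hν
  set π : Measure ((Fin n → ℝ) × (Fin n → ℝ)) := (volume : Measure (Fin n → ℝ)).prod ν with hπ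
  haveI : IsProbabilityMeasure ν :=
    ⟨by rw [hν, Measure.restrict_apply_univ, TwoScale.volume_unitCell]⟩
  have hSmp : ∀ j, MeasurePreserving
      (fun p : (Fin n → ℝ) × (Fin n → ℝ) => unfoldPt n (εs j) p.1 p.2) π volume :=
    fun j => TwoScale.measurePreserving_unfold n (hεpos j)
  have hfstmp : MeasurePreserving (Prod.fst : ((Fin n → ℝ) × (Fin n → ℝ)) → (Fin n → ℝ))
      π volume := ⟨measurable_fst, by rw [hπ, Measure.map_fst_prod, measure_univ, one_smul]⟩
  have hUS : ∀ j, AEStronglyMeasurable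
      (fun p : (Fin n → ℝ) × (Fin n → ℝ) => u j (unfoldPt n (εs j) p.1 p.2)) π :=
    fun j => (hu j).aestronglyMeasurable.comp_measurePreserving (hSmp j)
  have hUlimF : AEStronglyMeasurable (fun p : (Fin n → ℝ) × (Fin n → ℝ) => ulim p.1) π :=
    hulim.aestronglyMeasurable.comp_measurePreserving hfstmp
  have hF : ∀ j, AEStronglyMeasurable
      (fun p : (Fin n → ℝ) × (Fin n → ℝ) => u j (unfoldPt n (εs j) p.1 p.2) - ulim p.1) π :=
    fun j => (hUS j).sub hUlimF
  -- step 1 : the middle (translation) term tends to zero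
  have hA : Tendsto (fun j => eLpNorm (fun p : (Fin n → ℝ) × (Fin n → ℝ) =>
      ulim (unfoldPt n (εs j) p.1 p.2) - ulim p.1) 2 π) atTop (nhds 0) := by
    rw [ENNReal.tendsto_nhds_zero]
    intro δ hδ
    have hδ3 : (0:ℝ≥0∞) < δ / 3 := ENNReal.div_pos hδ.ne' (by norm_num)
    obtain ⟨g, hgsupp, hgclose, hgcont, hgLp⟩ :=
      hulim.exists_hasCompactSupport_eLpNorm_sub_le ENNReal.ofNat_ne_top hδ3.ne'
    have hmidL := TwoScale.lintegral_sq_unfold_tendsto g hgcont hgsupp hεpos hε0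
    have hmid : Tendsto (fun j => eLpNorm (fun p : (Fin n → ℝ) × (Fin n → ℝ) =>
        g (unfoldPt n (εs j) p.1 p.2) - g p.1) 2 π) atTop (nhds 0) := by
      simp_rw [TwoScale.eLpNorm_two_eq]
      have := ((ENNReal.continuous_rpow_const (y := (1/2:ℝ))).tendsto 0).comp hmidL
      simpa [ENNReal.zero_rpow_of_pos, Function.comp_def] using this
    have hmid' := (ENNReal.tendsto_nhds_zero.1 hmid) (δ/3) hδ3
    filter_upwards [hmid'] with j hj
    have hgS : AEStronglyMeasurable
        (fun p : (Fin n → ℝ) × (Fin n → ℝ) => g (unfoldPt n (εs j) p.1 p.2)) π :=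
      hgLp.aestronglyMeasurable.comp_measurePreserving (hSmp j)
    have hgF : AEStronglyMeasurable (fun p : (Fin n → ℝ) × (Fin n → ℝ) => g p.1) π :=
      hgLp.aestronglyMeasurable.comp_measurePreserving hfstmp
    have hulimS : AEStronglyMeasurable
        (fun p : (Fin n → ℝ) × (Fin n → ℝ) => ulim (unfoldPt n (εs j) p.1 p.2)) π :=
      hulim.aestronglyMeasurable.comp_measurePreserving (hSmp j)
    have hdec : (fun p : (Fin n → ℝ) × (Fin n → ℝ) =>
        ulim (unfoldPt n (εs j) p.1 p.2) - ulim p.1)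
        = (fun p : (Fin n → ℝ) × (Fin n → ℝ) => (ulim - g) (unfoldPt n (εs j) p.1 p.2)) +
          ((fun p : (Fin n → ℝ) × (Fin n → ℝ) => g (unfoldPt n (εs j) p.1 p.2) - g p.1) +
           (fun p : (Fin n → ℝ) × (Fin n → ℝ) => (g - ulim) p.1)) := by
      funext p; simp only [Pi.add_apply, Pi.sub_apply]; ring
    rw [hdec]
    have h1 : eLpNorm (fun p : (Fin n → ℝ) × (Fin n → ℝ) =>
        (ulim - g) (unfoldPt n (εs j) p.1 p.2)) 2 π ≤ δ / 3 := by
      rw [show (fun p : (Fin n → ℝ) × (Fin n → ℝ) => (ulim - g) (unfoldPt n (εs j) p.1 p.2))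
          = (ulim - g) ∘ (fun p : (Fin n → ℝ) × (Fin n → ℝ) =>
            unfoldPt n (εs j) p.1 p.2) from rfl,
        eLpNorm_comp_measurePreserving (hulim.sub hgLp).aestronglyMeasurable (hSmp j)]
      exact hgclose
    have h3 : eLpNorm (fun p : (Fin n → ℝ) × (Fin n → ℝ) => (g - ulim) p.1) 2 π ≤ δ / 3 := by
      rw [show (fun p : (Fin n → ℝ) × (Fin n → ℝ) => (g - ulim) p.1)
          = (g - ulim) ∘ Prod.fst from rfl,
        eLpNorm_comp_measurePreserving (hgLp.sub hulim).aestronglyMeasurable hfstmp,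
        eLpNorm_sub_comm]
      exact hgclose
    calc eLpNorm _ 2 π
        ≤ eLpNorm (fun p : (Fin n → ℝ) × (Fin n → ℝ) =>
            (ulim - g) (unfoldPt n (εs j) p.1 p.2)) 2 π +
          eLpNorm ((fun p : (Fin n → ℝ) × (Fin n → ℝ) =>
            g (unfoldPt n (εs j) p.1 p.2) - g p.1) +
           (fun p : (Fin n → ℝ) × (Fin n → ℝ) => (g - ulim) p.1)) 2 π := by
          refine eLpNorm_add_le ?_ ((hgS.sub hgF).add (hgF.sub hUlimF)) one_le_two
          exact hulimS.sub hgS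
      _ ≤ eLpNorm (fun p : (Fin n → ℝ) × (Fin n → ℝ) =>
            (ulim - g) (unfoldPt n (εs j) p.1 p.2)) 2 π +
          (eLpNorm (fun p : (Fin n → ℝ) × (Fin n → ℝ) =>
            g (unfoldPt n (εs j) p.1 p.2) - g p.1) 2 π +
           eLpNorm (fun p : (Fin n → ℝ) × (Fin n → ℝ) => (g - ulim) p.1) 2 π) := by
          exact add_le_add_right (eLpNorm_add_le (hgS.sub hgF) (hgF.sub hUlimF) one_le_two) _
      _ ≤ δ / 3 + (δ / 3 + δ / 3) := by
          exact add_le_add h1 (add_le_add hj h3)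
      _ = δ := by rw [← add_assoc]; exact ENNReal.add_thirds δ
  -- step 2 : the full unfolded error tends to zero in eLpNorm
  have hFle : ∀ j, eLpNorm (fun p : (Fin n → ℝ) × (Fin n → ℝ) =>
      u j (unfoldPt n (εs j) p.1 p.2) - ulim p.1) 2 π
      ≤ eLpNorm (u j - ulim) 2 (volume : Measure (Fin n → ℝ)) +
        eLpNorm (fun p : (Fin n → ℝ) × (Fin n → ℝ) =>
          ulim (unfoldPt n (εs j) p.1 p.2) - ulim p.1) 2 π := by
    intro j
    have hulimS : AEStronglyMeasurable
        (fun p : (Fin n → ℝ) × (Fin n → ℝ) => ulim (unfoldPt n (εs j) p.1 p.2)) π :=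
      hulim.aestronglyMeasurable.comp_measurePreserving (hSmp j)
    have hdec : (fun p : (Fin n → ℝ) × (Fin n → ℝ) =>
        u j (unfoldPt n (εs j) p.1 p.2) - ulim p.1)
        = (fun p : (Fin n → ℝ) × (Fin n → ℝ) => (u j - ulim) (unfoldPt n (εs j) p.1 p.2)) +
          (fun p : (Fin n → ℝ) × (Fin n → ℝ) =>
            ulim (unfoldPt n (εs j) p.1 p.2) - ulim p.1) := by
      funext p; simp only [Pi.add_apply, Pi.sub_apply]; ring
    rw [hdec]
    refine (eLpNorm_add_le ((hUS j).sub hulimS) (hulimS.sub hUlimF) one_le_two).trans ?_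
    refine add_le_add_left (le_of_eq ?_) _
    rw [show ((fun p : (Fin n → ℝ) × (Fin n → ℝ) => u j (unfoldPt n (εs j) p.1 p.2)) -
          fun p : (Fin n → ℝ) × (Fin n → ℝ) => ulim (unfoldPt n (εs j) p.1 p.2))
        = (u j - ulim) ∘ (fun p : (Fin n → ℝ) × (Fin n → ℝ) =>
          unfoldPt n (εs j) p.1 p.2) from rfl,
      eLpNorm_comp_measurePreserving ((hu j).sub hulim).aestronglyMeasurable (hSmp j)]
  have hFtend : Tendsto (fun j => eLpNorm (fun p : (Fin n → ℝ) × (Fin n → ℝ) =>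
      u j (unfoldPt n (εs j) p.1 p.2) - ulim p.1) 2 π) atTop (nhds 0) := by
    have hsum := hstrong.add hA
    rw [add_zero] at hsum
    exact tendsto_of_tendsto_of_tendsto_of_le_of_le tendsto_const_nhds hsum
      (fun j => zero_le) hFle
  -- step 3 : convert to the iterated real integral
  have hFLp : ∀ j, MemLp (fun p : (Fin n → ℝ) × (Fin n → ℝ) =>
      u j (unfoldPt n (εs j) p.1 p.2) - ulim p.1) 2 π := by
    intro j
    refine MemLp.sub ⟨hUS j, ?_⟩ ⟨hUlimF, ?_⟩
    · rw [show (fun p : (Fin n → ℝ) × (Fin n → ℝ) => u j (unfoldPt n (εs j) p.1 p.2))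
          = (u j) ∘ (fun p : (Fin n → ℝ) × (Fin n → ℝ) =>
            unfoldPt n (εs j) p.1 p.2) from rfl,
        eLpNorm_comp_measurePreserving (hu j).aestronglyMeasurable (hSmp j)]
      exact (hu j).2
    · rw [show (fun p : (Fin n → ℝ) × (Fin n → ℝ) => ulim p.1) = ulim ∘ Prod.fst from rfl,
        eLpNorm_comp_measurePreserving hulim.aestronglyMeasurable hfstmp]
      exact hulim.2
  have hInt : ∀ j, Integrable (fun p : (Fin n → ℝ) × (Fin n → ℝ) =>
      |u j (unfoldPt n (εs j) p.1 p.2) - ulim p.1| ^ 2) π := by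
    intro j
    have h := (hFLp j).integrable_norm_rpow two_ne_zero ENNReal.ofNat_ne_top
    simpa [Real.norm_eq_abs, ENNReal.toReal_ofNat, Real.rpow_natCast] using h
  have hL : Tendsto (fun j => ∫⁻ p : (Fin n → ℝ) × (Fin n → ℝ),
      ENNReal.ofReal (|u j (unfoldPt n (εs j) p.1 p.2) - ulim p.1| ^ 2) ∂π)
      atTop (nhds 0) := by
    have heq : ∀ j, (∫⁻ p : (Fin n → ℝ) × (Fin n → ℝ),
        ENNReal.ofReal (|u j (unfoldPt n (εs j) p.1 p.2) - ulim p.1| ^ 2) ∂π)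
        = (eLpNorm (fun p : (Fin n → ℝ) × (Fin n → ℝ) =>
            u j (unfoldPt n (εs j) p.1 p.2) - ulim p.1) 2 π) ^ (2:ℝ) := by
      intro j
      rw [TwoScale.eLpNorm_two_eq, ← ENNReal.rpow_mul]
      norm_num
    simp_rw [heq]
    have := ((ENNReal.continuous_rpow_const (y := (2:ℝ))).tendsto 0).comp hFtend
    simpa [ENNReal.zero_rpow_of_pos, Function.comp_def] using this
  have hgoal : ∀ j, (∫ x : Fin n → ℝ, ∫ y in unitCell n,
      |u j (unfoldPt n (εs j) x y) - ulim x| ^ 2)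
      = (∫⁻ p : (Fin n → ℝ) × (Fin n → ℝ),
        ENNReal.ofReal (|u j (unfoldPt n (εs j) p.1 p.2) - ulim p.1| ^ 2) ∂π).toReal := by
    intro j
    rw [← MeasureTheory.integral_prod _ (hInt j)]
    rw [MeasureTheory.integral_eq_lintegral_of_nonneg_ae
      (ae_of_all _ fun p => by positivity) ?_]
    have : AEStronglyMeasurable (fun p : (Fin n → ℝ) × (Fin n → ℝ) =>
        ‖u j (unfoldPt n (εs j) p.1 p.2) - ulim p.1‖ ^ 2) π := (hF j).norm.pow 2
    simpa [Real.norm_eq_abs] using this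
  have hfinal := (ENNReal.tendsto_toReal (by simp : (0:ℝ≥0∞) ≠ ⊤)).comp hL
  refine Tendsto.congr (fun j => (hgoal j).symm) ?_
  simpa [Function.comp_def] using hfinal
end
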